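/- arXiv:1912.01467 — 2 statements merged into one kernel-verified Lean document; each statement's English description precedes it below -/
import Mathlib

section
/- Let f be convex and differentiable on 𝕊^n, let X* minimize f over S_n with δ := λ_{n-1}(∇f(X*)) − λ_n(∇f(X*)) > 0, and let v_n be the unit eigenvector of ∇f(X*) corresponding to λ_n(∇f(X*)). Then for every X ∈ S_n, ⟨X − X*, ∇f(X*)⟩ ≥ δ(1 − v_nᵀ X v_n). -/
/-!
Write `G = ∇f(X*)` and `λ` for its smallest eigenvalue. The rank-one matrix `v vᵀ` lies in the
spectrahedron, so first-order optimality of `X*` in the direction `v vᵀ - X*` gives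
`⟨X*, G⟩ ≤ vᵀ G v = λ`. In an eigenbasis of `G` the gap forces `v` to span the `λ`-eigenspace,
whence `xᵀ G x ≥ λ |x|² + δ (|x|² - (vᵀ x)²)` for every `x`; summing this over a rank-one
decomposition `X = ∑ b bᵀ` of `X ∈ S_n` gives `⟨X, G⟩ ≥ λ + δ (1 - vᵀ X v)`.
-/

open Matrix
open scoped RealInnerProductSpace

noncomputable section

/-- Trace (Frobenius) inner product on real square matrices. -/
def tinner {n : ℕ} (A B : Matrix (Fin n) (Fin n) ℝ) : ℝ := ∑ i, ∑ j, A i j * B i j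

/-- Squared Frobenius norm. -/
def frobSq {n : ℕ} (A : Matrix (Fin n) (Fin n) ℝ) : ℝ := ∑ i, ∑ j, (A i j)^2

/-- Frobenius norm. -/
def frobNorm {n : ℕ} (A : Matrix (Fin n) (Fin n) ℝ) : ℝ := Real.sqrt (frobSq A)

/-- The spectrahedron: positive semidefinite matrices with unit trace. -/
def Spectra (n : ℕ) : Set (Matrix (Fin n) (Fin n) ℝ) :=
  {X | X.PosSemidef ∧ X.trace = 1}

/-- Eigenvalues of a symmetric matrix sorted in non-decreasing order, so that
`sortedEigs hA 0` is the smallest eigenvalue (λ_n in the paper's non-increasing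
convention), `sortedEigs hA 1` is the second smallest (λ_{n-1}), and in general
`sortedEigs hA i = λ_{n-i}`. -/
def sortedEigs {n : ℕ} {A : Matrix (Fin n) (Fin n) ℝ} (hA : A.IsHermitian) : Fin n → ℝ :=
  hA.eigenvalues ∘ Tuple.sort hA.eigenvalues

section Tinner

variable {n : ℕ}

lemma tinner_comm (A B : Matrix (Fin n) (Fin n) ℝ) : tinner A B = tinner B A := by
  simp only [tinner, mul_comm]

lemma tinner_sub_right (A B C : Matrix (Fin n) (Fin n) ℝ) :
    tinner A (B - C) = tinner A B - tinner A C := by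
  simp only [tinner, Matrix.sub_apply, mul_sub, Finset.sum_sub_distrib]

lemma tinner_sum_right {ι : Type*} (s : Finset ι) (A : Matrix (Fin n) (Fin n) ℝ)
    (B : ι → Matrix (Fin n) (Fin n) ℝ) : tinner A (∑ k ∈ s, B k) = ∑ k ∈ s, tinner A (B k) := by
  simp only [tinner, Matrix.sum_apply, Finset.mul_sum]
  exact (Finset.sum_congr rfl fun _ _ => Finset.sum_comm).trans Finset.sum_comm

lemma tinner_vecMulVec_self_right (A : Matrix (Fin n) (Fin n) ℝ) (b : Fin n → ℝ) :
    tinner A (vecMulVec b b) = b ⬝ᵥ (A *ᵥ b) := by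
  simp only [tinner, vecMulVec_apply, dotProduct, mulVec, Finset.mul_sum]
  exact Finset.sum_congr rfl fun _ _ => Finset.sum_congr rfl fun _ _ => by ring

lemma Matrix.PosSemidef.le_tinner_of_forall_le_dotProduct_mulVec
    {X G : Matrix (Fin n) (Fin n) ℝ} (hX : X.PosSemidef) {c d : ℝ} {v : Fin n → ℝ}
    (hG : ∀ x, c * (x ⬝ᵥ x) + d * (x ⬝ᵥ x - (v ⬝ᵥ x) ^ 2) ≤ x ⬝ᵥ (G *ᵥ x)) :
    c * X.trace + d * (X.trace - v ⬝ᵥ (X *ᵥ v)) ≤ tinner G X := by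
  obtain ⟨r, b, rfl⟩ := Matrix.posSemidef_iff_eq_sum_vecMulVec.mp hX
  simp only [star_trivial]
  have hquad : v ⬝ᵥ ((∑ k, vecMulVec (b k) (b k)) *ᵥ v) = ∑ k, (v ⬝ᵥ b k) ^ 2 := by
    simp only [sum_mulVec, dotProduct_sum, vecMulVec_mulVec, op_smul_eq_smul, dotProduct_smul,
      smul_eq_mul, dotProduct_comm (b _) v, sq]
  rw [hquad, tinner_sum_right, trace_sum]
  simp only [trace_vecMulVec, tinner_vecMulVec_self_right, Finset.mul_sum,
    ← Finset.sum_sub_distrib, ← Finset.sum_add_distrib]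
  exact Finset.sum_le_sum fun k _ => hG (b k)

end Tinner

namespace Matrix.IsHermitian

variable {m : Type*} [Fintype m] [DecidableEq m] {A : Matrix m m ℝ} (hA : A.IsHermitian)

lemma sum_eigenvectorBasis_dotProduct_mul (x y : m → ℝ) :
    ∑ i, (hA.eigenvectorBasis i ⬝ᵥ x) * (hA.eigenvectorBasis i ⬝ᵥ y) = x ⬝ᵥ y := by
  simpa [PiLp.inner_apply, dotProduct, mul_comm] using
    hA.eigenvectorBasis.sum_inner_mul_inner (WithLp.toLp 2 x) (WithLp.toLp 2 y)

lemma eigenvectorBasis_dotProduct_mulVec (i : m) (x : m → ℝ) :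
    hA.eigenvectorBasis i ⬝ᵥ (A *ᵥ x) = hA.eigenvalues i * (hA.eigenvectorBasis i ⬝ᵥ x) := by
  have hAT : Aᵀ = A := by simpa [IsHermitian, conjTranspose_eq_transpose_of_trivial] using hA
  rw [dotProduct_mulVec, ← mulVec_transpose, hAT, hA.mulVec_eigenvectorBasis, smul_dotProduct,
    smul_eq_mul]

lemma eigenvectorBasis_dotProduct_eq_zero {v : m → ℝ} {μ : ℝ} (hv : A *ᵥ v = μ • v) {i : m}
    (hi : hA.eigenvalues i ≠ μ) : hA.eigenvectorBasis i ⬝ᵥ v = 0 := by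
  have h := hA.eigenvectorBasis_dotProduct_mulVec i v
  rw [hv, dotProduct_smul, smul_eq_mul] at h
  exact (mul_eq_mul_right_iff.mp h).resolve_left hi.symm

lemma dotProduct_mulVec_eq_sum (x : m → ℝ) :
    x ⬝ᵥ (A *ᵥ x) = ∑ i, hA.eigenvalues i * (hA.eigenvectorBasis i ⬝ᵥ x) ^ 2 := by
  rw [← hA.sum_eigenvectorBasis_dotProduct_mul x (A *ᵥ x)]
  exact Finset.sum_congr rfl fun i _ => by rw [hA.eigenvectorBasis_dotProduct_mulVec]; ring

lemma sq_dotProduct_eq_sq_eigenvectorBasis_dotProduct {v : m → ℝ} (hvv : v ⬝ᵥ v = 1) {i₀ : m}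
    (hv : ∀ i ≠ i₀, hA.eigenvectorBasis i ⬝ᵥ v = 0) (x : m → ℝ) :
    (v ⬝ᵥ x) ^ 2 = (hA.eigenvectorBasis i₀ ⬝ᵥ x) ^ 2 := by
  have hsum : ∀ y, ∑ i, (hA.eigenvectorBasis i ⬝ᵥ v) * (hA.eigenvectorBasis i ⬝ᵥ y)
      = (hA.eigenvectorBasis i₀ ⬝ᵥ v) * (hA.eigenvectorBasis i₀ ⬝ᵥ y) := fun y =>
    Finset.sum_eq_single i₀ (fun i _ hi => by rw [hv i hi, zero_mul]) (by simp)
  have hunit : (hA.eigenvectorBasis i₀ ⬝ᵥ v) ^ 2 = 1 := by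
    rw [sq, ← hsum, hA.sum_eigenvectorBasis_dotProduct_mul, hvv]
  rw [← hA.sum_eigenvectorBasis_dotProduct_mul v x, hsum, mul_pow, hunit, one_mul]

lemma le_dotProduct_mulVec_of_eigengap {i₀ : m} {μ : ℝ}
    (hgap : ∀ i ≠ i₀, μ ≤ hA.eigenvalues i) (hlt : hA.eigenvalues i₀ < μ) {v : m → ℝ}
    (hv : A *ᵥ v = hA.eigenvalues i₀ • v) (hvv : v ⬝ᵥ v = 1) (x : m → ℝ) :
    hA.eigenvalues i₀ * (x ⬝ᵥ x) + (μ - hA.eigenvalues i₀) * (x ⬝ᵥ x - (v ⬝ᵥ x) ^ 2)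
      ≤ x ⬝ᵥ (A *ᵥ x) := by
  set c := fun i => hA.eigenvectorBasis i ⬝ᵥ x
  have hvi : ∀ i ≠ i₀, hA.eigenvectorBasis i ⬝ᵥ v = 0 := fun i hi =>
    hA.eigenvectorBasis_dotProduct_eq_zero hv (hlt.trans_le (hgap i hi)).ne'
  have hnorm : x ⬝ᵥ x = c i₀ ^ 2 + ∑ i ∈ Finset.univ.erase i₀, c i ^ 2 := by
    rw [← hA.sum_eigenvectorBasis_dotProduct_mul x x,
      ← Finset.add_sum_erase _ _ (Finset.mem_univ i₀)]
    simp only [c, sq]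
  have hquad : x ⬝ᵥ (A *ᵥ x)
      = hA.eigenvalues i₀ * c i₀ ^ 2 + ∑ i ∈ Finset.univ.erase i₀, hA.eigenvalues i * c i ^ 2 := by
    rw [hA.dotProduct_mulVec_eq_sum, ← Finset.add_sum_erase _ _ (Finset.mem_univ i₀)]
  have hrest : μ * ∑ i ∈ Finset.univ.erase i₀, c i ^ 2
      ≤ ∑ i ∈ Finset.univ.erase i₀, hA.eigenvalues i * c i ^ 2 := by
    rw [Finset.mul_sum]
    exact Finset.sum_le_sum fun i hi =>
      mul_le_mul_of_nonneg_right (hgap i (Finset.ne_of_mem_erase hi)) (sq_nonneg _)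
  rw [hA.sq_dotProduct_eq_sq_eigenvectorBasis_dotProduct hvv hvi, hquad, hnorm]
  linear_combination hrest

end Matrix.IsHermitian

lemma sortedEigs_one_le_eigenvalues {m : ℕ} [NeZero m] {A : Matrix (Fin m) (Fin m) ℝ}
    (hA : A.IsHermitian) {i : Fin m} (hi : i ≠ Tuple.sort hA.eigenvalues 0) :
    sortedEigs hA 1 ≤ hA.eigenvalues i := by
  obtain ⟨j, rfl⟩ := (Tuple.sort hA.eigenvalues).surjective i
  have hj : j ≠ 0 := by rintro rfl; exact hi rfl
  exact Tuple.monotone_sort hA.eigenvalues (Fin.one_le_of_ne_zero hj)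

lemma convex_spectra (n : ℕ) : Convex ℝ (Spectra n) := by
  intro X hX Y hY a b ha hb hab
  exact ⟨(hX.1.smul ha).add (hY.1.smul hb), by simp [trace_add, trace_smul, hX.2, hY.2, hab]⟩

lemma vecMulVec_self_mem_spectra {n : ℕ} {v : Fin n → ℝ} (hv : v ⬝ᵥ v = 1) :
    vecMulVec v v ∈ Spectra n :=
  ⟨by simpa using posSemidef_vecMulVec_self_star v, by rw [trace_vecMulVec, hv]⟩

lemma IsMinOn.nonneg_of_hasDerivAt_segment {E : Type*} [AddCommGroup E] [Module ℝ E]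
    {f : E → ℝ} {S : Set E} {x y : E} (hmin : IsMinOn f S x) (hS : Convex ℝ S) (hx : x ∈ S)
    (hy : y ∈ S) {d : ℝ} (hd : HasDerivAt (fun t : ℝ => f (x + t • (y - x))) d 0) : 0 ≤ d := by
  have hloc : IsLocalMinOn (fun t : ℝ => f (x + t • (y - x))) (Set.Icc 0 1) 0 :=
    Filter.eventually_of_mem self_mem_nhdsWithin fun t ht => by
      simpa using isMinOn_iff.mp hmin _ (hS.add_smul_sub_mem hx hy ht)
  simpa using hloc.hasFDerivWithinAt_nonneg hd.hasFDerivAt.hasFDerivWithinAt (y := 1)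
    (mem_posTangentConeAt_of_segment_subset (by simp [segment_eq_Icc]))

theorem stmt2_general {n : ℕ} (f : Matrix (Fin (n+2)) (Fin (n+2)) ℝ → ℝ)
    (Gf : Matrix (Fin (n+2)) (Fin (n+2)) ℝ → Matrix (Fin (n+2)) (Fin (n+2)) ℝ)
    (hdiff : ∀ X H, HasDerivAt (fun t : ℝ => f (X + t • H)) (tinner (Gf X) H) 0)
    (Xs : Matrix (Fin (n+2)) (Fin (n+2)) ℝ) (hXs : Xs ∈ Spectra (n+2))
    (hopt : ∀ X ∈ Spectra (n+2), f Xs ≤ f X)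
    (hG : (Gf Xs).IsHermitian)
    (δ : ℝ) (hδ : δ = sortedEigs hG 1 - sortedEigs hG 0) (hδpos : 0 < δ)
    (v : Fin (n+2) → ℝ) (hv : ∑ i, (v i)^2 = 1)
    (hev : (Gf Xs) *ᵥ v = sortedEigs hG 0 • v) :
    ∀ X ∈ Spectra (n+2), tinner (X - Xs) (Gf Xs) ≥ δ * (1 - v ⬝ᵥ (X *ᵥ v)) := by
  intro X hX
  have hvv : v ⬝ᵥ v = 1 := by simpa [dotProduct, sq] using hv
  have hXs_le : tinner (Gf Xs) Xs ≤ sortedEigs hG 0 := by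
    have h := (isMinOn_iff.mpr hopt).nonneg_of_hasDerivAt_segment (convex_spectra _) hXs
      (vecMulVec_self_mem_spectra hvv) (hdiff Xs _)
    rwa [tinner_sub_right, tinner_vecMulVec_self_right, hev, dotProduct_smul, hvv, smul_eq_mul,
      mul_one, sub_nonneg] at h
  have hquad : ∀ x, sortedEigs hG 0 * (x ⬝ᵥ x) + δ * (x ⬝ᵥ x - (v ⬝ᵥ x) ^ 2)
      ≤ x ⬝ᵥ (Gf Xs *ᵥ x) := by
    rw [hδ]
    exact hG.le_dotProduct_mulVec_of_eigengap (fun i hi => sortedEigs_one_le_eigenvalues hG hi)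
      (sub_pos.mp (hδ ▸ hδpos)) hev hvv
  have hX_ge := hX.1.le_tinner_of_forall_le_dotProduct_mulVec hquad
  rw [hX.2] at hX_ge
  rw [ge_iff_le, tinner_comm, tinner_sub_right]
  linarith

/-- Under the eigen-gap assumption, with `v` the unit eigenvector of `∇f(X*)`
for the smallest eigenvalue, `⟨X − X*, ∇f(X*)⟩ ≥ δ(1 − vᵀXv)` for all `X ∈ S_n`. -/
theorem stmt2 {n : ℕ} (f : Matrix (Fin (n+2)) (Fin (n+2)) ℝ → ℝ)
    (Gf : Matrix (Fin (n+2)) (Fin (n+2)) ℝ → Matrix (Fin (n+2)) (Fin (n+2)) ℝ)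
    (hconv : ConvexOn ℝ Set.univ f)
    (hdiff : ∀ X H, HasDerivAt (fun t : ℝ => f (X + t • H)) (tinner (Gf X) H) 0)
    (Xs : Matrix (Fin (n+2)) (Fin (n+2)) ℝ) (hXs : Xs ∈ Spectra (n+2))
    (hopt : ∀ X ∈ Spectra (n+2), f Xs ≤ f X)
    (hG : (Gf Xs).IsHermitian)
    (δ : ℝ) (hδ : δ = sortedEigs hG 1 - sortedEigs hG 0) (hδpos : 0 < δ)
    (v : Fin (n+2) → ℝ) (hv : ∑ i, (v i)^2 = 1)
    (hev : (Gf Xs) *ᵥ v = sortedEigs hG 0 • v) :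
    ∀ X ∈ Spectra (n+2), tinner (X - Xs) (Gf Xs) ≥ δ * (1 - v ⬝ᵥ (X *ᵥ v)) :=
  stmt2_general f Gf hdiff Xs hXs hopt hG δ hδ hδpos v hv hev
end
end

section
/- For any X ∈ S_n and any unit vector v ∈ ℝ^n, ‖X − vvᵀ‖_F² ≤ 2(1 − vᵀ X v). -/
/-!
Expanding the square gives `‖X - vvᵀ‖² = ‖X‖² - 2 vᵀXv + ‖v‖⁴`, so it suffices that `‖X‖_F ≤ 1`
on the spectrahedron. Nonnegativity of the `2 × 2` principal minors of `X` gives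
`X i j ^ 2 ≤ X i i * X j j`, and summing over `i, j` yields `‖X‖_F² ≤ (tr X)² = 1`.
-/

open Matrix
open scoped RealInnerProductSpace

noncomputable section

theorem Matrix.PosSemidef.sq_apply_le_mul_diag {ι : Type*} [Fintype ι] {A : Matrix ι ι ℝ}
    (hA : A.PosSemidef) (i j : ι) : A i j ^ 2 ≤ A i i * A j j := by
  have hminor := (hA.submatrix ![i, j]).det_nonneg
  have hsymm : A j i = A i j := hA.1.apply i j
  rw [det_fin_two] at hminor
  simp only [submatrix_apply, Matrix.cons_val_zero, Matrix.cons_val_one, hsymm] at hminor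
  linarith [sq (A i j)]

theorem frobSq_le_trace_sq {n : ℕ} {X : Matrix (Fin n) (Fin n) ℝ} (hX : X.PosSemidef) :
    frobSq X ≤ X.trace ^ 2 :=
  calc frobSq X ≤ ∑ i, ∑ j, X i i * X j j :=
        Finset.sum_le_sum fun i _ ↦ Finset.sum_le_sum fun j _ ↦ hX.sq_apply_le_mul_diag i j
    _ = X.trace ^ 2 := by rw [sq, trace, Finset.sum_mul_sum]; rfl

theorem frobSq_sub {n : ℕ} (A B : Matrix (Fin n) (Fin n) ℝ) :
    frobSq (A - B) = frobSq A - 2 * tinner A B + frobSq B := by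
  simp only [frobSq, tinner, Matrix.sub_apply, Finset.mul_sum, ← Finset.sum_sub_distrib,
    ← Finset.sum_add_distrib]
  congr! 2 with i _ j _
  ring

theorem tinner_vecMulVec_self {n : ℕ} (A : Matrix (Fin n) (Fin n) ℝ) (v : Fin n → ℝ) :
    tinner A (vecMulVec v v) = v ⬝ᵥ (A *ᵥ v) := by
  simp only [tinner, vecMulVec_apply, dotProduct, mulVec, Finset.mul_sum]
  congr! 2 with i _ j _
  ring

theorem frobSq_vecMulVec {n : ℕ} (u w : Fin n → ℝ) :
    frobSq (vecMulVec u w) = (∑ i, u i ^ 2) * ∑ j, w j ^ 2 := by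
  simp only [frobSq, vecMulVec_apply, mul_pow, Finset.sum_mul_sum]

/-- For any `X` in the spectrahedron and any unit vector `v`,
`‖X − vvᵀ‖_F² ≤ 2(1 − vᵀXv)`. -/
theorem stmt4 {n : ℕ} (X : Matrix (Fin n) (Fin n) ℝ) (hX : X ∈ Spectra n)
    (v : Fin n → ℝ) (hv : ∑ i, (v i)^2 = 1) :
    frobSq (X - vecMulVec v v) ≤ 2 * (1 - v ⬝ᵥ (X *ᵥ v)) := by
  obtain ⟨hpsd, htr⟩ := hX
  have hX_le : frobSq X ≤ 1 := by simpa [htr] using frobSq_le_trace_sq hpsd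
  rw [frobSq_sub, tinner_vecMulVec_self, frobSq_vecMulVec, hv]
  linarith
end
end
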